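/- The planar relativistic collision map R̂ satisfies the additional parametric invariant condition: for all real α, β with q = α − β and all x, y ∈ ℝ³ with ⟨x+y, x+y⟩ + q² ≠ 0, setting (u, v) = R̂_{α,β}(x, y), one has α·u₀ + β·v₀ + (v₁u₂ − u₁v₂) = α·x₀ + β·y₀ + (x₁y₂ − y₁x₂). -/

import Mathlib

set_option maxHeartbeats 1600000


/-- The three-dimensional Minkowski bilinear form on `ℝ³`. -/
def mink3 (a b : ℝ × ℝ × ℝ) : ℝ :=
  a.1 * b.1 - a.2.1 * b.2.1 - a.2.2 * b.2.2

/-- The coefficient `k̂(x,y,q)` of the planar relativistic collision map. -/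
noncomputable def khat (x y : ℝ × ℝ × ℝ) (q : ℝ) : ℝ :=
  (mink3 x x - mink3 y y + q ^ 2) / (mink3 (x + y) (x + y) + q ^ 2)

/-- The vector `r̂(x,y,q)` of the planar relativistic collision map. -/
noncomputable def rhat (x y : ℝ × ℝ × ℝ) (q : ℝ) : ℝ × ℝ × ℝ :=
  (mink3 (x + y) (x + y) + q ^ 2)⁻¹ •
    ((x.2.1 * y.2.2 - x.2.2 * y.2.1,
      x.1 * y.2.2 - x.2.2 * y.1,
      x.2.1 * y.1 - x.1 * y.2.1) : ℝ × ℝ × ℝ)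

/-- The planar relativistic collision map `R̂_{α,β}`. -/
noncomputable def Rhat (α β : ℝ) (x y : ℝ × ℝ × ℝ) :
    (ℝ × ℝ × ℝ) × (ℝ × ℝ × ℝ) :=
  (khat x y (α - β) • x + (1 - khat y x (α - β)) • y +
      (2 * (α - β)) • rhat x y (α - β),
   (1 - khat x y (α - β)) • x + khat y x (α - β) • y -
      (2 * (α - β)) • rhat x y (α - β))

/-- The planar relativistic collision map satisfies the additional parametric
invariant condition
`α·u₀ + β·v₀ + (v₁u₂ − u₁v₂) = α·x₀ + β·y₀ + (x₁y₂ − y₁x₂)`. -/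
theorem planar_collision_extra_invariant
    (α β : ℝ) (x y : ℝ × ℝ × ℝ)
    (h : mink3 (x + y) (x + y) + (α - β) ^ 2 ≠ 0)
    (u v : ℝ × ℝ × ℝ) (huv : (u, v) = Rhat α β x y) :
    α * u.1 + β * v.1 + (v.2.1 * u.2.2 - u.2.1 * v.2.2) =
      α * x.1 + β * y.1 + (x.2.1 * y.2.2 - y.2.1 * x.2.2) := by
  obtain ⟨x0, x1, x2⟩ := x
  obtain ⟨y0, y1, y2⟩ := y
  simp only [Rhat, khat, rhat, mink3, Prod.mk.injEq, Prod.smul_mk, Prod.mk_add_mk,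
    Prod.mk_sub_mk, smul_eq_mul, Prod.ext_iff, div_eq_mul_inv] at huv h ⊢
  obtain ⟨⟨hu0, hu1, hu2⟩, hv0, hv1, hv2⟩ := huv
  rw [show (y0 + x0) * (y0 + x0) - (y1 + x1) * (y1 + x1) - (y2 + x2) * (y2 + x2) + (α - β) ^ 2
      = (x0 + y0) * (x0 + y0) - (x1 + y1) * (x1 + y1) - (x2 + y2) * (x2 + y2) + (α - β) ^ 2
      from by ring] at hu0 hu1 hu2 hv0 hv1 hv2
  have hs0 : v.1 = x0 + y0 - u.1 := by
    rw [hu0, hv0]; ring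
  have hs1 : v.2.1 = x1 + y1 - u.2.1 := by
    rw [hu1, hv1]; ring
  have hs2 : v.2.2 = x2 + y2 - u.2.2 := by
    rw [hu2, hv2]; ring
  have key : (α - β) * u.1 + ((x1 + y1) * u.2.2 - (x2 + y2) * u.2.1)
      = (α - β) * x0 + (x1 * y2 - x2 * y1) := by
    rw [hu0, hu1, hu2]
    have hD := mul_inv_cancel₀ h
    linear_combination ((α - β) * (x0 - y0)) * hD
  rw [hs0, hs1, hs2]
  linear_combination key
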